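/- Let G be an undirected graph and let a linear order on V(G) be fixed. Let H be the directed acyclic graph obtained from G by orienting each edge {u, v} with u < v as u→v, and adding two new nodes s and t together with edges s→u and u→t for every u ∈ V(G). Then a subset U ⊆ V(G) is a vertex cover of G if and only if H \ U contains no odd-length directed s→t path. -/
import Mathlib


/-- A (simple) directed path in the directed graph `G`, represented as a nonempty
list of pairwise distinct vertices in which every consecutive pair is an edge of `G`. -/
def IsPath {V : Type*} (G : V → V → Prop) (p : List V) : Prop :=
  p ≠ [] ∧ p.Chain' G ∧ p.Nodup

/-- `p` is a directed path from `u` to `v` in `G`. -/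
def IsPathFrom {V : Type*} (G : V → V → Prop) (u v : V) (p : List V) : Prop :=
  IsPath G p ∧ p.head? = some u ∧ p.getLast? = some v

/-- The length (number of edges) of a path, given as its list of vertices. -/
def pathLen {V : Type*} (p : List V) : ℕ := p.length - 1

/-- The list of directed edges traversed by a path. -/
def edgesOf {V : Type*} (p : List V) : List (V × V) := p.zip p.tail

/-- A directed graph is acyclic (a DAG) if no vertex lies on a directed cycle. -/
def Acyclic {V : Type*} (G : V → V → Prop) : Prop :=
  ∀ v, ¬ Relation.TransGen G v v

/-- The graph obtained from `G` by deleting the vertex set `M`. -/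
def delV {V : Type*} (G : V → V → Prop) (M : Set V) : V → V → Prop :=
  fun a b => G a b ∧ a ∉ M ∧ b ∉ M

/-- The DAG `H` built from an undirected graph `G` (with a linear order on its
vertices): edges of `G` are oriented from smaller to larger endpoint, and two
new vertices `s = Sum.inr false` and `t = Sum.inr true` are added with edges
`s → u` and `u → t` for every `u ∈ V(G)`. -/
def vcGraph {V : Type*} [LT V] (G : SimpleGraph V) : V ⊕ Bool → V ⊕ Bool → Prop
  | Sum.inl u, Sum.inl v => G.Adj u v ∧ u < v
  | Sum.inr false, Sum.inl _ => True
  | Sum.inl _, Sum.inr true => True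
  | _, _ => False

/-- **(Reduction from Vertex Cover, DAG version.)**
`U ⊆ V(G)` is a vertex cover of `G` iff `H \ U` has no odd-length directed
`s → t` path, where `H = vcGraph G`. -/
theorem vertex_cover_iff_no_odd_path {V : Type*} [LinearOrder V]
    (G : SimpleGraph V) (U : Set V) :
    (∀ u v, G.Adj u v → u ∈ U ∨ v ∈ U) ↔
    ¬ ∃ p, IsPathFrom (delV (vcGraph G) (Sum.inl '' U))
        (Sum.inr false) (Sum.inr true) p ∧ Odd (pathLen p) := by
  constructor
  · rintro hcov ⟨p, ⟨⟨hne, hch, hnd⟩, hh, hl⟩, hodd⟩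
    match p, hh with
    | (Sum.inr false :: rest), hh =>
      match rest, hl with
      | [], hl => simp at hl
      | (y :: rest2), hl =>
        obtain ⟨h1, hch⟩ := List.isChain_cons_cons.mp hch
        match y, h1 with
        | Sum.inl a, h1 =>
          match rest2, hl with
          | [], hl => simp at hl
          | (z :: rest3), hl =>
            obtain ⟨h2, hch⟩ := List.isChain_cons_cons.mp hch
            match z, h2 with
            | Sum.inl b, h2 =>
              rcases hcov a b h2.1.1 with ha | hb
              · exact h2.2.1 ⟨a, ha, rfl⟩
              · exact h2.2.2 ⟨b, hb, rfl⟩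
            | Sum.inr false, h2 => exact h2.1
            | Sum.inr true, h2 =>
              match rest3, hodd with
              | [], hodd => simp [pathLen, Nat.odd_iff] at hodd
              | (w :: rest4), hodd =>
                obtain ⟨h3, hch⟩ := List.isChain_cons_cons.mp hch
                match w, h3 with
                | Sum.inl c, h3 => exact h3.1
                | Sum.inr false, h3 => exact h3.1
                | Sum.inr true, h3 => exact h3.1
        | Sum.inr false, h1 => exact h1.1
        | Sum.inr true, h1 => exact h1.1
  · intro hno u v hadj
    by_contra h
    push_neg at h
    obtain ⟨hu, hv⟩ := h
    apply hno
    have hsU : (Sum.inr false : V ⊕ Bool) ∉ Sum.inl '' U := by simp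
    have htU : (Sum.inr true : V ⊕ Bool) ∉ Sum.inl '' U := by simp
    have huU : (Sum.inl u : V ⊕ Bool) ∉ Sum.inl '' U := by simpa using hu
    have hvU : (Sum.inl v : V ⊕ Bool) ∉ Sum.inl '' U := by simpa using hv
    rcases lt_or_gt_of_ne hadj.ne with hlt | hgt
    · refine ⟨[Sum.inr false, Sum.inl u, Sum.inl v, Sum.inr true],
        ⟨⟨by simp, ?_, ?_⟩, rfl, rfl⟩, ⟨1, rfl⟩⟩
      · exact List.isChain_cons_cons.mpr ⟨⟨trivial, hsU, huU⟩,
          List.isChain_cons_cons.mpr ⟨⟨⟨hadj, hlt⟩, huU, hvU⟩,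
            List.isChain_cons_cons.mpr ⟨⟨trivial, hvU, htU⟩, List.isChain_singleton _⟩⟩⟩
      · simp [hadj.ne]
    · refine ⟨[Sum.inr false, Sum.inl v, Sum.inl u, Sum.inr true],
        ⟨⟨by simp, ?_, ?_⟩, rfl, rfl⟩, ⟨1, rfl⟩⟩
      · exact List.isChain_cons_cons.mpr ⟨⟨trivial, hsU, hvU⟩,
          List.isChain_cons_cons.mpr ⟨⟨⟨hadj.symm, hgt⟩, hvU, huU⟩,
            List.isChain_cons_cons.mpr ⟨⟨trivial, huU, htU⟩, List.isChain_singleton _⟩⟩⟩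
      · simp [hadj.ne.symm]
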